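/- arXiv:math/0506304 — 2 statements merged into one kernel-verified Lean document; each statement's English description precedes it below -/
import Mathlib

section
/- Let G be a finite group, s, t ∈ G with s·t⁻¹·s⁻¹ = t·s⁻¹·t⁻¹, and set x = t·s⁻¹. Let H be the cyclic subgroup generated by x and J the cyclic subgroup generated by t. Then J ∩ H is the trivial subgroup. -/
theorem stmt_3 {G : Type*} [Group G] [Finite G] (s t : G)
    (hrel : s * t⁻¹ * s⁻¹ = t * s⁻¹ * t⁻¹) (x : G) (hx : x = t * s⁻¹) :
    Subgroup.zpowers t ⊓ Subgroup.zpowers x = ⊥ := by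
  have key : t⁻¹ * x * t = x ^ 2 := by
    subst hx
    have h : t * s⁻¹ = s * t⁻¹ * s⁻¹ * t := by rw [hrel]; group
    calc t⁻¹ * (t * s⁻¹) * t = s⁻¹ * t := by group
      _ = (t * s⁻¹) ^ 2 := by rw [pow_two]; nth_rewrite 2 [h]; group
  rw [eq_bot_iff]
  intro g hg
  rw [Subgroup.mem_inf] at hg
  obtain ⟨m, hm⟩ := Subgroup.mem_zpowers_iff.mp hg.1
  obtain ⟨n, hn⟩ := Subgroup.mem_zpowers_iff.mp hg.2
  have hcomm : t⁻¹ * g * t = g := by rw [← hm]; group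
  have hconj : t⁻¹ * x ^ n * t = (t⁻¹ * x * t) ^ n := by
    have := map_zpow (MulAut.conj t⁻¹) x n
    simpa [MulAut.conj_apply, mul_assoc] using this
  have hg2 : t⁻¹ * g * t = g ^ 2 := by
    rw [← hn, hconj, key, ← zpow_natCast, ← zpow_natCast, ← zpow_mul, ← zpow_mul, mul_comm]
  have hg1 : g = 1 := by
    have h1 : g = g * g := by
      have := hcomm.symm.trans hg2
      rwa [pow_two] at this
    exact left_eq_mul.mp h1
  simp [hg1]
end

section
/- Let G be a finite group generated by two elements s, t satisfying s·t⁻¹·s⁻¹ = t·s⁻¹·t⁻¹, with s ≠ t. Set x = t·s⁻¹, H = ⟨x⟩, J = ⟨t⟩. Then H is a normal subgroup of the subgroup generated by H and J, H ∩ J = {e}, and G = H·J; that is, G is the (internal) semidirect product of J acting on H. -/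
/-!
Inverting the relation gives `s t s⁻¹ = t s t⁻¹`, which says exactly that conjugation by `t⁻¹`
squares `x = t s⁻¹`. Hence `t⁻¹` maps `⟨x⟩` into itself, and onto it since `⟨x⟩` is finite, so `t`
normalises `⟨x⟩`; as `s = x⁻¹ t`, the subgroups `⟨x⟩` and `⟨t⟩` generate `G`, and `⟨x⟩` is normal.
An element `z` of `⟨x⟩ ∩ ⟨t⟩` commutes with `t` yet is squared by conjugation, so `z = z²` and `z = 1`.
-/

open Subgroup

section

variable {G : Type*} [Group G]

theorem inv_conj_mul_inv_eq_sq_of_rel {s t : G} (h : s * t⁻¹ * s⁻¹ = t * s⁻¹ * t⁻¹) :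
    t⁻¹ * (t * s⁻¹) * t = (t * s⁻¹) ^ 2 := by
  have h' : s * t * s⁻¹ = t * s * t⁻¹ := by simpa [mul_assoc] using congrArg (·⁻¹) h
  calc t⁻¹ * (t * s⁻¹) * t = s⁻¹ * (t * s * t⁻¹) * t * s⁻¹ := by group
    _ = s⁻¹ * (s * t * s⁻¹) * t * s⁻¹ := by rw [h']
    _ = (t * s⁻¹) ^ 2 := by rw [sq]; group

theorem sup_zpowers_mul_inv_eq_top {s t : G} (h : closure {s, t} = ⊤) :
    zpowers (t * s⁻¹) ⊔ zpowers t = ⊤ := by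
  refine eq_top_iff.mpr (h ▸ closure_le _ |>.mpr ?_)
  rintro g (rfl | rfl)
  · rw [SetLike.mem_coe]
    convert mul_mem (mem_sup_left (inv_mem (mem_zpowers (t * g⁻¹)))) (mem_sup_right (mem_zpowers t))
      using 2
    group
  · exact mem_sup_right (mem_zpowers g)

theorem mem_normalizer_zpowers_of_inv_conj_mem {g x : G} (hx : IsOfFinOrder x)
    (h : g⁻¹ * x * g ∈ zpowers x) : g ∈ normalizer (zpowers x : Set G) := by
  have := hx.finite_zpowers.to_subtype
  have hg : g⁻¹ ∈ normalizer (zpowers x : Set G) := by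
    refine mem_normalizer_fintype fun n hn => ?_
    obtain ⟨a, rfl⟩ := mem_zpowers_iff.mp hn
    rw [← conj_zpow, inv_inv]
    exact zpow_mem h a
  simpa using inv_mem hg

theorem zpowers_inf_zpowers_eq_bot_of_inv_conj_eq_sq {g x : G} (h : g⁻¹ * x * g = x ^ 2) :
    zpowers x ⊓ zpowers g = ⊥ := by
  refine eq_bot_iff.mpr fun z ⟨hzx, hzg⟩ => ?_
  obtain ⟨a, rfl⟩ := mem_zpowers_iff.mp hzx
  obtain ⟨b, hb⟩ := mem_zpowers_iff.mp hzg
  have hcomm : g⁻¹ * x ^ a * g = x ^ a := by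
    rw [← hb, mul_assoc, ← ((Commute.refl g).zpow_right b).eq, inv_mul_cancel_left]
  have hsq : g⁻¹ * x ^ a * g = x ^ a * x ^ a := by
    have hpow : g⁻¹ * x ^ a * g = (g⁻¹ * x * g) ^ a := by simpa using (conj_zpow (a := g⁻¹)).symm
    rw [hpow, h, sq, (Commute.refl x).mul_zpow]
  exact mem_bot.mpr (mul_eq_left.mp (hsq.symm.trans hcomm))

end

theorem stmt_5_general {G : Type*} [Group G] [Finite G] (s t : G)
    (hgen : Subgroup.closure {s, t} = ⊤)
    (hrel : s * t⁻¹ * s⁻¹ = t * s⁻¹ * t⁻¹)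
    (x : G) (hx : x = t * s⁻¹) :
    (Subgroup.zpowers x).Normal ∧
    Subgroup.zpowers x ⊓ Subgroup.zpowers t = ⊥ ∧
    Subgroup.zpowers x ⊔ Subgroup.zpowers t = ⊤ := by
  subst hx
  have hconj := inv_conj_mul_inv_eq_sq_of_rel hrel
  have hsup := sup_zpowers_mul_inv_eq_top hgen
  have ht : t ∈ normalizer (zpowers (t * s⁻¹) : Set G) :=
    mem_normalizer_zpowers_of_inv_conj_mem (isOfFinOrder_of_finite _)
      (hconj ▸ pow_mem (mem_zpowers _) 2)
  refine ⟨?_, zpowers_inf_zpowers_eq_bot_of_inv_conj_eq_sq hconj, hsup⟩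
  rw [← normalizer_eq_top_iff, eq_top_iff, ← hsup]
  exact sup_le le_normalizer (zpowers_le.mpr ht)

theorem stmt_5 {G : Type*} [Group G] [Finite G] (s t : G)
    (hgen : Subgroup.closure {s, t} = ⊤)
    (hrel : s * t⁻¹ * s⁻¹ = t * s⁻¹ * t⁻¹) (hst : s ≠ t)
    (x : G) (hx : x = t * s⁻¹) :
    (Subgroup.zpowers x).Normal ∧
    Subgroup.zpowers x ⊓ Subgroup.zpowers t = ⊥ ∧
    Subgroup.zpowers x ⊔ Subgroup.zpowers t = ⊤ :=
  stmt_5_general s t hgen hrel x hx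
end
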